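/- For any integer k ≥ 0, κ > 0, and α > 0, the determinant function satisfies F_k(α) = α J_k(κ/α) J_{k+1}(α) − (κ/α) J_k(α) J_{k+1}(κ/α), and also F_{k+1}(α) = (κ/α) J_k(κ/α) J_{k+1}(α) − α J_k(α) J_{k+1}(κ/α). Consequently, if F_k(α) = 0 then F_{k+1}(α) = ((κ² − α⁴)/(κα)) J_{k+1}(α) J_k(κ/α). -/

import Mathlib

/-!
Both product forms come from the recurrences `x J_k'(x) = k J_k(x) - x J_{k+1}(x)` and
`x J_{k+1}'(x) = x J_k(x) - (k+1) J_{k+1}(x)`: substituting them into `F_k` and `F_{k+1}` the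
terms carrying the factor `k` (resp. `k+1`) cancel. The recurrences are proved coefficientwise on
the power series, after differentiating it termwise. If `F_k(α) = 0`, the first product form
expresses `J_k(α) J_{k+1}(κ/α)` through `J_{k+1}(α) J_k(κ/α)`, and substituting into the second
gives the last claim.
-/

open Real Set

/-- Bessel function of the first kind of integer order `k`, defined by its power series. -/
noncomputable def besselJ (k : ℕ) (x : ℝ) : ℝ :=
  ∑' m : ℕ, ((-1 : ℝ) ^ m / ((Nat.factorial m : ℝ) * (Nat.factorial (m + k) : ℝ))) *
    (x / 2) ^ (2 * m + k)

noncomputable def besselCoeff (k m : ℕ) : ℝ :=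
  (-1 : ℝ) ^ m / ((Nat.factorial m : ℝ) * (Nat.factorial (m + k) : ℝ))

lemma besselJ_eq_tsum (k : ℕ) (x : ℝ) :
    besselJ k x = ∑' m : ℕ, besselCoeff k m * (x / 2) ^ (2 * m + k) := rfl

lemma abs_besselCoeff_le (k m : ℕ) : |besselCoeff k m| ≤ (Nat.factorial m : ℝ)⁻¹ := by
  have h1 : (1 : ℝ) ≤ (Nat.factorial (m + k) : ℝ) := by
    exact_mod_cast Nat.one_le_of_lt (Nat.factorial_pos _)
  rw [besselCoeff, abs_div, abs_pow, abs_neg, abs_one, one_pow, abs_of_pos (by positivity),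
    one_div]
  exact inv_anti₀ (by positivity) (le_mul_of_one_le_right (by positivity) h1)

lemma besselCoeff_succ_right (k m : ℕ) :
    (2 * (m : ℝ) + 2) * besselCoeff k (m + 1) = -2 * besselCoeff (k + 1) m := by
  rw [besselCoeff, besselCoeff, show m + 1 + k = m + (k + 1) by omega, pow_succ,
    Nat.factorial_succ]
  field_simp
  push_cast
  ring

lemma besselCoeff_succ_left (k m : ℕ) :
    (2 * (m : ℝ) + 2 * k + 2) * besselCoeff (k + 1) m = 2 * besselCoeff k m := by
  rw [besselCoeff, besselCoeff, show m + (k + 1) = m + k + 1 by omega, Nat.factorial_succ]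
  field_simp
  push_cast
  ring

lemma summable_pow_two_mul_add_div_factorial (k : ℕ) (r : ℝ) :
    Summable (fun m : ℕ => r ^ (2 * m + k) / (Nat.factorial m : ℝ)) :=
  ((Real.summable_pow_div_factorial (r ^ 2)).mul_left (r ^ k)).congr fun m => by
    rw [pow_add, pow_mul]; ring

lemma summable_besselJ_series (k : ℕ) (x : ℝ) :
    Summable (fun m : ℕ => besselCoeff k m * (x / 2) ^ (2 * m + k)) := by
  refine .of_norm_bounded (summable_pow_two_mul_add_div_factorial k (|x| / 2)) fun m => ?_
  rw [norm_mul, norm_pow, Real.norm_eq_abs, Real.norm_eq_abs, abs_div, abs_two]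
  exact (mul_le_mul_of_nonneg_right (abs_besselCoeff_le k m) (by positivity)).trans_eq
    (inv_mul_eq_div _ _)

lemma abs_nat_mul_half_pow_pred_le (n : ℕ) {y R : ℝ} (hR : 2 ≤ R) (hy : |y| ≤ R) :
    |(n : ℝ) * (y / 2) ^ (n - 1) / 2| ≤ R ^ n := by
  have hn : (n : ℝ) ≤ 2 ^ n := by exact_mod_cast (Nat.lt_two_pow_self (n := n)).le
  have hpow : |y / 2| ^ (n - 1) ≤ (R / 2) ^ n :=
    calc |y / 2| ^ (n - 1) ≤ (R / 2) ^ (n - 1) := by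
          gcongr; rw [abs_div, abs_two]; linarith
      _ ≤ (R / 2) ^ n := pow_le_pow_right₀ (by linarith) (Nat.sub_le n 1)
  calc |(n : ℝ) * (y / 2) ^ (n - 1) / 2| ≤ (n : ℝ) * |y / 2| ^ (n - 1) := by
        rw [abs_div, abs_mul, abs_pow, Nat.abs_cast, abs_two]
        linarith [mul_nonneg (Nat.cast_nonneg n : (0 : ℝ) ≤ n)
          (pow_nonneg (abs_nonneg (y / 2)) (n - 1))]
    _ ≤ 2 ^ n * (R / 2) ^ n := by gcongr
    _ = R ^ n := by rw [← mul_pow]; ring_nf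

lemma abs_besselJ_series_deriv_le (k m : ℕ) {y R : ℝ} (hR : 2 ≤ R) (hy : |y| ≤ R) :
    |besselCoeff k m * ((2 * m + k : ℕ) * (y / 2) ^ (2 * m + k - 1) / 2)|
      ≤ R ^ (2 * m + k) / (Nat.factorial m : ℝ) := by
  rw [abs_mul, div_eq_inv_mul _ (Nat.factorial m : ℝ)]
  exact mul_le_mul (abs_besselCoeff_le k m) (abs_nat_mul_half_pow_pred_le _ hR hy)
    (abs_nonneg _) (by positivity)

lemma hasDerivAt_besselJ (k : ℕ) (x : ℝ) :
    HasDerivAt (besselJ k)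
      (∑' m : ℕ, besselCoeff k m * ((2 * m + k : ℕ) * (x / 2) ^ (2 * m + k - 1) / 2)) x := by
  have hterm (m : ℕ) (y : ℝ) : HasDerivAt (fun z => besselCoeff k m * (z / 2) ^ (2 * m + k))
      (besselCoeff k m * ((2 * m + k : ℕ) * (y / 2) ^ (2 * m + k - 1) / 2)) y :=
    ((((hasDerivAt_id' y).div_const 2).fun_pow (2 * m + k)).const_mul
      (besselCoeff k m)).congr_deriv (by ring)
  refine hasDerivAt_tsum_of_isPreconnected (summable_pow_two_mul_add_div_factorial k (|x| + 2))
    Metric.isOpen_ball (convex_ball (0 : ℝ) (|x| + 1)).isPreconnected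
    (fun m y _ => hterm m y) (fun m y hy => ?_) (Metric.mem_ball_self (by positivity))
    (summable_besselJ_series k 0) (by simp)
  have hy : |y| ≤ |x| + 2 := by
    have := Metric.mem_ball.mp hy
    rw [Real.dist_eq, sub_zero] at this
    linarith
  exact abs_besselJ_series_deriv_le k m (by linarith [abs_nonneg x]) hy

lemma hasSum_mul_deriv_besselJ (k : ℕ) (x : ℝ) :
    HasSum (fun m : ℕ => (2 * m + k : ℕ) * (besselCoeff k m * (x / 2) ^ (2 * m + k)))
      (x * deriv (besselJ k) x) := by
  have hsum : Summable fun m : ℕ =>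
      besselCoeff k m * ((2 * m + k : ℕ) * (x / 2) ^ (2 * m + k - 1) / 2) :=
    .of_norm_bounded (summable_pow_two_mul_add_div_factorial k (|x| + 2)) fun m =>
      abs_besselJ_series_deriv_le k m (by linarith [abs_nonneg x]) (by linarith)
  rw [(hasDerivAt_besselJ k x).deriv]
  refine (hsum.hasSum.mul_left x).congr_fun fun m => ?_
  cases 2 * m + k with
  | zero => simp
  | succ n => rw [Nat.add_sub_cancel, pow_succ]; ring

lemma mul_deriv_besselJ (k : ℕ) (x : ℝ) :
    x * deriv (besselJ k) x = k * besselJ k x - x * besselJ (k + 1) x := by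
  have hEuler : HasSum (fun m : ℕ => 2 * (m : ℝ) * (besselCoeff k m * (x / 2) ^ (2 * m + k)))
      (x * deriv (besselJ k) x - k * besselJ k x) := by
    refine ((hasSum_mul_deriv_besselJ k x).sub
      ((summable_besselJ_series k x).hasSum.mul_left (k : ℝ))).congr_fun fun m => ?_
    push_cast; ring
  -- the `m = 0` term vanishes, and the shift `m ↦ m + 1` turns the rest into `-x J_{k+1}(x)`
  have hshift : HasSum (fun m : ℕ => -x * (besselCoeff (k + 1) m * (x / 2) ^ (2 * m + (k + 1))))
      (x * deriv (besselJ k) x - k * besselJ k x) := by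
    have h := (hasSum_nat_add_iff' 1).mpr hEuler
    rw [Finset.sum_range_one, Nat.cast_zero, mul_zero, zero_mul, sub_zero] at h
    refine h.congr_fun fun m => ?_
    have hpow : x * (x / 2) ^ (2 * m + (k + 1)) = 2 * (x / 2) ^ (2 * (m + 1) + k) := by
      rw [show 2 * (m + 1) + k = 2 * m + (k + 1) + 1 by omega, pow_succ]; ring
    push_cast
    linear_combination besselCoeff (k + 1) m * hpow
      - (x / 2) ^ (2 * (m + 1) + k) * besselCoeff_succ_right k m
  rw [besselJ_eq_tsum (k + 1)]
  linarith [hshift.unique ((summable_besselJ_series (k + 1) x).hasSum.mul_left (-x))]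

lemma mul_deriv_besselJ_succ (k : ℕ) (x : ℝ) :
    x * deriv (besselJ (k + 1)) x = x * besselJ k x - ((k : ℝ) + 1) * besselJ (k + 1) x := by
  refine (hasSum_mul_deriv_besselJ (k + 1) x).unique ?_
  refine (((summable_besselJ_series k x).hasSum.mul_left x).sub
    ((summable_besselJ_series (k + 1) x).hasSum.mul_left ((k : ℝ) + 1))).congr_fun fun m => ?_
  have hpow : x * (x / 2) ^ (2 * m + k) = 2 * (x / 2) ^ (2 * m + (k + 1)) := by
    rw [← add_assoc, pow_succ]; ring
  push_cast
  linear_combination (x / 2) ^ (2 * m + (k + 1)) * besselCoeff_succ_left k m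
    - besselCoeff k m * hpow

lemma besselJ_cross_deriv_eq (k : ℕ) (a b : ℝ) :
    b * besselJ k a * deriv (besselJ k) b - a * besselJ k b * deriv (besselJ k) a
      = a * besselJ k b * besselJ (k + 1) a - b * besselJ k a * besselJ (k + 1) b := by
  linear_combination besselJ k a * mul_deriv_besselJ k b - besselJ k b * mul_deriv_besselJ k a

lemma besselJ_succ_cross_deriv_eq (k : ℕ) (a b : ℝ) :
    b * besselJ (k + 1) a * deriv (besselJ (k + 1)) b
        - a * besselJ (k + 1) b * deriv (besselJ (k + 1)) a
      = b * besselJ k b * besselJ (k + 1) a - a * besselJ k a * besselJ (k + 1) b := by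
  linear_combination besselJ (k + 1) a * mul_deriv_besselJ_succ k b
    - besselJ (k + 1) b * mul_deriv_besselJ_succ k a

theorem Fk_product_forms_general (k : ℕ) (κ α : ℝ) (hκ : 0 < κ) :
    let F : ℕ → ℝ → ℝ := fun m a =>
      (κ / a) * besselJ m a * deriv (besselJ m) (κ / a)
        - a * besselJ m (κ / a) * deriv (besselJ m) a
    F k α = α * besselJ k (κ / α) * besselJ (k + 1) α
        - (κ / α) * besselJ k α * besselJ (k + 1) (κ / α) ∧
    F (k + 1) α = (κ / α) * besselJ k (κ / α) * besselJ (k + 1) α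
        - α * besselJ k α * besselJ (k + 1) (κ / α) ∧
    (F k α = 0 →
      F (k + 1) α = ((κ ^ 2 - α ^ 4) / (κ * α)) * besselJ (k + 1) α * besselJ k (κ / α)) := by
  intro F
  have hFk : F k α = _ := besselJ_cross_deriv_eq k α (κ / α)
  have hFk1 : F (k + 1) α = _ := besselJ_succ_cross_deriv_eq k α (κ / α)
  refine ⟨hFk, hFk1, fun hzero => ?_⟩
  rw [hFk] at hzero
  rw [hFk1]
  field_simp at hzero ⊢
  linear_combination α ^ 2 * hzero

/-- Product forms of the determinant `F_k` and `F_{k+1}`, and the consequence that if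
`F_k(α) = 0` then `F_{k+1}(α) = ((κ² − α⁴)/(κα)) J_{k+1}(α) J_k(κ/α)`. -/
theorem Fk_product_forms (k : ℕ) (κ α : ℝ) (hκ : 0 < κ) (hα : 0 < α) :
    let F : ℕ → ℝ → ℝ := fun m a =>
      (κ / a) * besselJ m a * deriv (besselJ m) (κ / a)
        - a * besselJ m (κ / a) * deriv (besselJ m) a
    F k α = α * besselJ k (κ / α) * besselJ (k + 1) α
        - (κ / α) * besselJ k α * besselJ (k + 1) (κ / α) ∧
    F (k + 1) α = (κ / α) * besselJ k (κ / α) * besselJ (k + 1) α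
        - α * besselJ k α * besselJ (k + 1) (κ / α) ∧
    (F k α = 0 →
      F (k + 1) α = ((κ ^ 2 - α ^ 4) / (κ * α)) * besselJ (k + 1) α * besselJ k (κ / α)) :=
  Fk_product_forms_general k κ α hκ
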